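/- Let α ∈ (0,1) and let r ∈ ℂ with 0 < |r| < 1. The linear map T_r on H_α given by (T_r a)_n = (n+1) r^n a_{n+1} (the operator representing D_φ for φ(z) = rz) is bounded, and its operator norm equals sup_{n ≥ 1} n^{(3−α)/2}(n+1)^{(α−1)/2}|r|^{n−1}. -/

import Mathlib

open Complex MeasureTheory Metric Set ENNReal

noncomputable section

/-- The open unit disk in the complex plane. -/
def unitDisc : Set ℂ := {z : ℂ | ‖z‖ < 1}

-- The order of vanishing (multiplicity) of `φ - w` at the point `z`.
open scoped Classical in
def vanishingOrder (φ : ℂ → ℂ) (w z : ℂ) : ℕ∞ :=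
  if h : AnalyticAt ℂ (fun ζ => φ ζ - w) z then analyticOrderAt (fun ζ => φ ζ - w) z else 0

/-- The generalized Nevanlinna counting function `N_{φ,α}(w)`, counting preimages
with multiplicity, valued in `ℝ≥0∞`. -/
def nevanlinna (α : ℝ) (φ : ℂ → ℂ) (w : ℂ) : ℝ≥0∞ :=
  ∑' z : unitDisc, (vanishingOrder φ w z : ℝ≥0∞) * ENNReal.ofReal ((1 - ‖(z : ℂ)‖ ^ 2) ^ α)

/-- `a` is the sequence of Taylor coefficients of `f` on the unit disc, and the corresponding
weighted Dirichlet norm is finite, i.e. `f ∈ D_α` with coefficient sequence `a`. -/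
def InDirichlet (α : ℝ) (f : ℂ → ℂ) (a : ℕ → ℂ) : Prop :=
  (∀ z ∈ unitDisc, HasSum (fun n : ℕ => a n * z ^ n) (f z)) ∧
    Summable (fun n : ℕ => ((n : ℝ) + 1) ^ (1 - α) * ‖a n‖ ^ 2)

/-- The squared `D_α` norm of a coefficient sequence. -/
def dirichletNormSq (α : ℝ) (a : ℕ → ℂ) : ℝ :=
  ∑' n : ℕ, ((n : ℝ) + 1) ^ (1 - α) * ‖a n‖ ^ 2

/-- The composition-differentiation operator `D_φ f = f' ∘ φ` is bounded on `D_α`. -/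
def DphiBounded (α : ℝ) (φ : ℂ → ℂ) : Prop :=
  ∃ C > 0, ∀ f : ℂ → ℂ, ∀ a : ℕ → ℂ, InDirichlet α f a →
    ∃ b : ℕ → ℂ, InDirichlet α (fun z => deriv f (φ z)) b ∧
      Real.sqrt (dirichletNormSq α b) ≤ C * Real.sqrt (dirichletNormSq α a)

/-- The weighted counting measure `μ_α = ∑ (n+1)^{1-α} δ_n` on `ℕ`. -/
def dirMeasure (α : ℝ) : Measure ℕ :=
  Measure.sum fun n : ℕ => (((n : ℝ≥0∞) + 1) ^ (1 - α)) • Measure.dirac n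

/-- A bounded operator `T` on `H_α = L²(ℕ, μ_α)` represents `D_φ` if for every `a ∈ H_α`,
with `f(z) = ∑ aₙ zⁿ`, the sequence `T a` is the Taylor coefficient sequence of `f' ∘ φ`,
i.e. `∑ (T a)ₙ zⁿ` converges to `(f' ∘ φ)(z)` on the disc. -/
def Represents (α : ℝ) (φ : ℂ → ℂ)
    (T : Lp ℂ 2 (dirMeasure α) →L[ℂ] Lp ℂ 2 (dirMeasure α)) : Prop :=
  ∀ a : Lp ℂ 2 (dirMeasure α), ∀ z ∈ unitDisc,
    HasSum (fun n => (T a : ℕ → ℂ) n * z ^ n)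
      (deriv (fun ζ => ∑' n : ℕ, (a : ℕ → ℂ) n * ζ ^ n) (φ z))

/-- The essential norm of a bounded operator: distance to the compact operators. -/
def essNorm {H : Type*} [NormedAddCommGroup H] [NormedSpace ℂ H]
    (T : H →L[ℂ] H) : ℝ :=
  sInf {c : ℝ | ∃ K : H →L[ℂ] H, IsCompactOperator ⇑K ∧ c = ‖T - K‖}

/-!
`T_r` is the weighted backward shift `a ↦ (w n * a (n + 1))` on `L²(ℕ, ∑ cₙ δₙ)`, with
`w n = (n + 1) rⁿ` and `cₙ = (n + 1) ^ (1 - α)`. Writing `|w n|² cₙ = m n² cₙ₊₁`, the squared norm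
of `T_r a` is `∑ m n² cₙ₊₁ |a (n + 1)|² ≤ (sup m)² ‖a‖²`, while the basis vector at `n + 1` is
stretched by exactly `m n`; hence `‖T_r‖ = sup m`. Here `m n` is the weight in the statement,
which is at most `(n + 1) |r|ⁿ` because `α ≤ 1`, so the supremum is finite.
-/

open Filter Topology

section CountableLp

variable {ι : Type*} [MeasurableSpace ι] [Countable ι] {μ : Measure ι}

theorem eq_of_ae_eq_of_measure_singleton_ne_zero {β : Type*} (hμ : ∀ i, μ {i} ≠ 0)
    {f g : ι → β} (h : f =ᵐ[μ] g) : f = g :=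
  funext fun i => ae_iff_of_countable.mp h i (hμ i)

variable [MeasurableSingletonClass ι]

theorem eLpNorm_two_sq_eq_tsum {E : Type*} [NormedAddCommGroup E] (f : ι → E) :
    eLpNorm f 2 μ ^ 2 = ∑' i, ‖f i‖ₑ ^ 2 * μ {i} := by
  have h := eLpNorm_nnreal_pow_eq_lintegral (f := f) (μ := μ) (p := 2) two_ne_zero
  simp only [NNReal.coe_ofNat, ENNReal.rpow_ofNat, ENNReal.coe_ofNat] at h
  rw [h, lintegral_countable']

theorem eLpNorm_two_sq_piSingle {E : Type*} [NormedAddCommGroup E] [DecidableEq ι] (i : ι)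
    (c : E) : eLpNorm (Pi.single i c) 2 μ ^ 2 = ‖c‖ₑ ^ 2 * μ {i} := by
  rw [eLpNorm_two_sq_eq_tsum, tsum_eq_single i fun j hj => by simp [hj]]
  simp

theorem exists_continuousLinearMap_Lp_coeFn_eq {𝕜 E : Type*} [NontriviallyNormedField 𝕜]
    [NormedAddCommGroup E] [NormedSpace 𝕜 E] {p : ℝ≥0∞} [Fact (1 ≤ p)] (hμ : ∀ i, μ {i} ≠ 0)
    (L : (ι → E) →ₗ[𝕜] ι → E) {C : ℝ} (hC : 0 ≤ C)
    (hL : ∀ f, eLpNorm (L f) p μ ≤ ENNReal.ofReal C * eLpNorm f p μ) :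
    ∃ T : Lp E p μ →L[𝕜] Lp E p μ, (∀ f, ⇑(T f) = L f) ∧ ‖T‖ ≤ C := by
  have coe_eq {f g : ι → E} (h : f =ᵐ[μ] g) : f = g :=
    eq_of_ae_eq_of_measure_singleton_ne_zero hμ h
  have memLp (f : Lp E p μ) : MemLp (L f) p μ :=
    ⟨.of_discrete,
      (hL f).trans_lt (ENNReal.mul_lt_top ENNReal.ofReal_lt_top (Lp.eLpNorm_lt_top f))⟩
  have coe_toLp (f : Lp E p μ) : ⇑((memLp f).toLp (L f)) = L f := coe_eq (memLp f).coeFn_toLp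
  let T : Lp E p μ →ₗ[𝕜] Lp E p μ :=
    { toFun f := (memLp f).toLp
      map_add' f g := Lp.ext <| .of_eq <| by
        rw [coe_toLp, coe_eq (Lp.coeFn_add f g), coe_eq (Lp.coeFn_add _ _), coe_toLp, coe_toLp,
          map_add]
      map_smul' c f := Lp.ext <| .of_eq <| by
        rw [RingHom.id_apply, coe_toLp, coe_eq (Lp.coeFn_smul c f), coe_eq (Lp.coeFn_smul _ _),
          coe_toLp, map_smul] }
  have hT (f : Lp E p μ) : ‖T f‖ ≤ C * ‖f‖ := by
    refine (Lp.norm_toLp _ (memLp f)).trans_le <|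
      ENNReal.toReal_le_of_le_ofReal (by positivity) ?_
    rw [ENNReal.ofReal_mul hC, Lp.norm_def, ENNReal.ofReal_toReal (Lp.eLpNorm_ne_top f)]
    exact hL f
  refine ⟨T.mkContinuous C hT, coe_toLp, ?_⟩
  exact T.mkContinuous_norm_le hC hT

end CountableLp

section WeightedShift

variable {𝕜 : Type*} [NontriviallyNormedField 𝕜]

def weightedShift (w : ℕ → 𝕜) : (ℕ → 𝕜) →ₗ[𝕜] ℕ → 𝕜 where
  toFun a n := w n * a (n + 1)
  map_add' _ _ := funext fun _ => mul_add _ _ _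
  map_smul' _ _ := funext fun _ => mul_left_comm _ _ _

theorem weightedShift_apply (w a : ℕ → 𝕜) (n : ℕ) : weightedShift w a n = w n * a (n + 1) :=
  rfl

variable {μ : Measure ℕ} {w : ℕ → 𝕜} {m : ℕ → ℝ}

theorem eLpNorm_weightedShift_sq
    (hm : ∀ n, ‖w n‖ₑ ^ 2 * μ {n} = ENNReal.ofReal (m n) ^ 2 * μ {n + 1}) (a : ℕ → 𝕜) :
    eLpNorm (weightedShift w a) 2 μ ^ 2 =
      ∑' n, ENNReal.ofReal (m n) ^ 2 * (‖a (n + 1)‖ₑ ^ 2 * μ {n + 1}) := by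
  rw [eLpNorm_two_sq_eq_tsum]
  refine tsum_congr fun n => ?_
  rw [weightedShift_apply, enorm_mul, mul_pow, mul_right_comm, hm, mul_right_comm, mul_assoc]

theorem eLpNorm_weightedShift_le
    (hm : ∀ n, ‖w n‖ₑ ^ 2 * μ {n} = ENNReal.ofReal (m n) ^ 2 * μ {n + 1}) {M : ℝ}
    (hM : ∀ n, m n ≤ M) (a : ℕ → 𝕜) :
    eLpNorm (weightedShift w a) 2 μ ≤ ENNReal.ofReal M * eLpNorm a 2 μ := by
  refine (ENNReal.pow_le_pow_left_iff two_ne_zero).mp ?_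
  rw [eLpNorm_weightedShift_sq hm, mul_pow, eLpNorm_two_sq_eq_tsum, ← ENNReal.tsum_mul_left]
  calc ∑' n, ENNReal.ofReal (m n) ^ 2 * (‖a (n + 1)‖ₑ ^ 2 * μ {n + 1})
      ≤ ∑' n, ENNReal.ofReal M ^ 2 * (‖a (n + 1)‖ₑ ^ 2 * μ {n + 1}) :=
        ENNReal.tsum_le_tsum fun n => by gcongr; exact hM n
    _ ≤ ∑' n, ENNReal.ofReal M ^ 2 * (‖a n‖ₑ ^ 2 * μ {n}) :=
        ENNReal.tsum_comp_le_tsum_of_injective (add_left_injective 1)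
          fun n => ENNReal.ofReal M ^ 2 * (‖a n‖ₑ ^ 2 * μ {n})

theorem eLpNorm_weightedShift_piSingle
    (hm : ∀ n, ‖w n‖ₑ ^ 2 * μ {n} = ENNReal.ofReal (m n) ^ 2 * μ {n + 1}) (k : ℕ) :
    eLpNorm (weightedShift w (Pi.single (k + 1) 1)) 2 μ =
      ENNReal.ofReal (m k) * eLpNorm (Pi.single (k + 1) (1 : 𝕜)) 2 μ := by
  have h : eLpNorm (weightedShift w (Pi.single (k + 1) 1)) 2 μ ^ 2 =
      (ENNReal.ofReal (m k) * eLpNorm (Pi.single (k + 1) (1 : 𝕜)) 2 μ) ^ 2 := by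
    rw [eLpNorm_weightedShift_sq hm, mul_pow, eLpNorm_two_sq_piSingle,
      tsum_eq_single k fun n hn => by simp [hn]]
    simp
  exact le_antisymm ((ENNReal.pow_le_pow_left_iff two_ne_zero).mp h.le)
    ((ENNReal.pow_le_pow_left_iff two_ne_zero).mp h.ge)

theorem exists_weightedShift_Lp_norm_eq (hμ0 : ∀ n, μ {n} ≠ 0) (hμtop : ∀ n, μ {n} ≠ ∞)
    (hm0 : ∀ n, 0 ≤ m n)
    (hm : ∀ n, ‖w n‖ₑ ^ 2 * μ {n} = ENNReal.ofReal (m n) ^ 2 * μ {n + 1})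
    (hbdd : BddAbove (range m)) :
    ∃ T : Lp 𝕜 2 μ →L[𝕜] Lp 𝕜 2 μ,
      (∀ a : Lp 𝕜 2 μ, ∀ n, (T a : ℕ → 𝕜) n = w n * (a : ℕ → 𝕜) (n + 1)) ∧
        ‖T‖ = ⨆ n, m n := by
  have hM (n : ℕ) : m n ≤ ⨆ n, m n := le_ciSup hbdd n
  obtain ⟨T, hT, hTM⟩ := exists_continuousLinearMap_Lp_coeFn_eq hμ0 (weightedShift w)
    ((hm0 0).trans (hM 0)) (eLpNorm_weightedShift_le hm hM)
  refine ⟨T, fun a n => congrFun (hT a) n, hTM.antisymm (ciSup_le fun k => ?_)⟩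
  have hsq := eLpNorm_two_sq_piSingle (μ := μ) (k + 1) (1 : 𝕜)
  rw [enorm_one, one_pow, one_mul] at hsq
  have he : MemLp (Pi.single (k + 1) (1 : 𝕜)) 2 μ :=
    ⟨.of_discrete, lt_top_iff_ne_top.mpr fun h => hμtop (k + 1) (by simpa [h] using hsq.symm)⟩
  set e := he.toLp
  have hcoe : ⇑e = Pi.single (k + 1) 1 :=
    eq_of_ae_eq_of_measure_singleton_ne_zero hμ0 he.coeFn_toLp
  have he0 : 0 < ‖e‖ := by
    rw [Lp.norm_def, hcoe]
    exact ENNReal.toReal_pos (fun h => hμ0 (k + 1) (by simpa [h] using hsq.symm)) he.2.ne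
  have hTe : ‖T e‖ = m k * ‖e‖ := by
    rw [Lp.norm_def, Lp.norm_def, hT, hcoe, eLpNorm_weightedShift_piSingle hm,
      ENNReal.toReal_mul, ENNReal.toReal_ofReal (hm0 k)]
  exact le_of_mul_le_mul_right (hTe ▸ T.le_opNorm e) he0

end WeightedShift

theorem dirMeasure_singleton (α : ℝ) (n : ℕ) :
    dirMeasure α {n} = ENNReal.ofReal (((n : ℝ) + 1) ^ (1 - α)) := by
  rw [dirMeasure, Measure.sum_apply _ (measurableSet_singleton n),
    tsum_eq_single n fun k hk => by simp [hk.symm], Measure.smul_apply,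
    Measure.dirac_apply_of_mem (mem_singleton n), smul_eq_mul, mul_one,
    ← ENNReal.ofReal_rpow_of_pos (by positivity)]
  norm_cast

theorem norm_sq_mul_rpow_eq (α : ℝ) (r : ℂ) (n : ℕ) :
    ‖((n : ℂ) + 1) * r ^ n‖ ^ 2 * ((n : ℝ) + 1) ^ (1 - α) =
      (((n : ℝ) + 1) ^ ((3 - α) / 2) * ((n : ℝ) + 2) ^ ((α - 1) / 2) * ‖r‖ ^ n) ^ 2 *
        ((n : ℝ) + 2) ^ (1 - α) := by
  have hx : (0 : ℝ) < n + 1 := by positivity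
  have hy : (0 : ℝ) < n + 2 := by positivity
  have h1 : (((n : ℝ) + 1) ^ ((3 - α) / 2)) ^ 2 = ((n : ℝ) + 1) ^ 2 * ((n : ℝ) + 1) ^ (1 - α) := by
    rw [← Real.rpow_mul_natCast hx.le, ← Real.rpow_natCast, ← Real.rpow_add hx]
    congr 1
    push_cast
    ring
  have h2 : (((n : ℝ) + 2) ^ ((α - 1) / 2)) ^ 2 * ((n : ℝ) + 2) ^ (1 - α) = 1 := by
    rw [← Real.rpow_mul_natCast hy.le, ← Real.rpow_add hy]
    norm_num
  have hnorm : ‖((n : ℂ) + 1) * r ^ n‖ = ((n : ℝ) + 1) * ‖r‖ ^ n := by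
    rw [norm_mul, norm_pow]; norm_cast
  rw [hnorm]
  linear_combination (-(‖r‖ ^ n) ^ 2) * h1 - (((n : ℝ) + 1) ^ ((3 - α) / 2) * ‖r‖ ^ n) ^ 2 * h2

theorem enorm_sq_mul_dirMeasure_singleton (α : ℝ) (r : ℂ) (n : ℕ) :
    ‖((n : ℂ) + 1) * r ^ n‖ₑ ^ 2 * dirMeasure α {n} =
      ENNReal.ofReal (((n : ℝ) + 1) ^ ((3 - α) / 2) * ((n : ℝ) + 2) ^ ((α - 1) / 2) * ‖r‖ ^ n) ^ 2
        * dirMeasure α {n + 1} := by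
  rw [dirMeasure_singleton, dirMeasure_singleton, ← ofReal_norm, ← ENNReal.ofReal_pow,
    ← ENNReal.ofReal_pow, ← ENNReal.ofReal_mul, ← ENNReal.ofReal_mul, norm_sq_mul_rpow_eq]
  · push_cast; ring_nf
  all_goals positivity

theorem bddAbove_range_dilation_weight {α : ℝ} (hα : α ≤ 1) {r : ℂ} (hr : ‖r‖ < 1) :
    BddAbove (range fun n : ℕ =>
      ((n : ℝ) + 1) ^ ((3 - α) / 2) * ((n : ℝ) + 2) ^ ((α - 1) / 2) * ‖r‖ ^ n) := by
  have hlim : Tendsto (fun n : ℕ => ((n : ℝ) + 1) * ‖r‖ ^ n) atTop (𝓝 0) := by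
    simpa [add_mul] using (tendsto_self_mul_const_pow_of_lt_one (norm_nonneg r) hr).add
      (tendsto_pow_atTop_nhds_zero_of_lt_one (norm_nonneg r) hr)
  refine hlim.bddAbove_range.range_mono _ fun n => ?_
  have hx : (0 : ℝ) < n + 1 := by positivity
  have hweight : ((n : ℝ) + 1) ^ ((3 - α) / 2) * ((n : ℝ) + 2) ^ ((α - 1) / 2) ≤ (n : ℝ) + 1 :=
    calc ((n : ℝ) + 1) ^ ((3 - α) / 2) * ((n : ℝ) + 2) ^ ((α - 1) / 2)
        ≤ ((n : ℝ) + 1) ^ ((3 - α) / 2) * ((n : ℝ) + 1) ^ ((α - 1) / 2) := by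
          refine mul_le_mul_of_nonneg_left ?_ (by positivity)
          exact Real.rpow_le_rpow_of_nonpos hx (by linarith) (by linarith)
      _ = (n : ℝ) + 1 := by
          rw [← Real.rpow_add hx, show (3 - α) / 2 + (α - 1) / 2 = 1 by ring, Real.rpow_one]
  gcongr

theorem Dphi_dilation_norm_sup_general
    (α : ℝ) (hα : α ∈ Set.Ioo (0 : ℝ) 1) (r : ℂ) (hr1 : ‖r‖ < 1) :
    ∃ T : Lp ℂ 2 (dirMeasure α) →L[ℂ] Lp ℂ 2 (dirMeasure α),
      (∀ a : Lp ℂ 2 (dirMeasure α), ∀ n : ℕ,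
        (T a : ℕ → ℂ) n = ((n : ℂ) + 1) * r ^ n * (a : ℕ → ℂ) (n + 1)) ∧
      ‖T‖ = ⨆ n : ℕ,
        ((n : ℝ) + 1) ^ ((3 - α) / 2) * ((n : ℝ) + 2) ^ ((α - 1) / 2) * ‖r‖ ^ n :=
  exists_weightedShift_Lp_norm_eq
    (fun n => by rw [dirMeasure_singleton]; exact (ENNReal.ofReal_pos.mpr (by positivity)).ne')
    (fun n => by rw [dirMeasure_singleton]; exact ENNReal.ofReal_ne_top)
    (fun n => by positivity) (enorm_sq_mul_dirMeasure_singleton α r)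
    (bddAbove_range_dilation_weight hα.2.le hr1)

/-- The operator on `H_α` representing `D_φ` for `φ(z) = rz` is bounded with
norm `sup_{n ≥ 1} n^{(3-α)/2}(n+1)^{(α-1)/2}|r|^{n-1}` (the supremum is reindexed by
`n ↦ n+1` over all `n : ℕ`). -/
theorem Dphi_dilation_norm_sup
    (α : ℝ) (hα : α ∈ Set.Ioo (0 : ℝ) 1) (r : ℂ) (hr0 : r ≠ 0) (hr1 : ‖r‖ < 1) :
    ∃ T : Lp ℂ 2 (dirMeasure α) →L[ℂ] Lp ℂ 2 (dirMeasure α),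
      (∀ a : Lp ℂ 2 (dirMeasure α), ∀ n : ℕ,
        (T a : ℕ → ℂ) n = ((n : ℂ) + 1) * r ^ n * (a : ℕ → ℂ) (n + 1)) ∧
      ‖T‖ = ⨆ n : ℕ,
        ((n : ℝ) + 1) ^ ((3 - α) / 2) * ((n : ℝ) + 2) ^ ((α - 1) / 2) * ‖r‖ ^ n :=
  Dphi_dilation_norm_sup_general α hα r hr1

end
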